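/- Fix m ≥ 1, n×n real matrices Φ₁,…,Φ_m, feedback matrices K₁,…,K_m (each p×n), a symmetric positive semidefinite p×p matrix r̃, and k ∈ ℕ. Let ξ_{i+1} = Φ_{σ(i)} ξ_i for i ≥ k and define the inputs u_{k+i} = K_{σ(k+i)} ξ_{k+i}. Let Ψ = Φ_{σ(k+m−1)} ⋯ Φ_{σ(k)} be the monodromy matrix, and set Π₀ = I and Π_i = Φ_{σ(k+i−1)} ⋯ Φ_{σ(k)} for 1 ≤ i ≤ m−1, and M_u = Σ_{i=0}^{m−1} (K_{σ(k+i)} Π_i)ᵀ r̃ (K_{σ(k+i)} Π_i). Assume the family (j ↦ (Ψᵀ)ʲ M_u Ψʲ) is summable and set P_u = Σ_{j=0}^{∞} (Ψᵀ)ʲ M_u Ψʲ. Then the infinite-horizon input cost satisfies Σ_{i=0}^{∞} u_{k+i}ᵀ r̃ u_{k+i} = ξ_kᵀ P_u ξ_k, and P_u satisfies the Lyapunov equation P_u = Ψᵀ P_u Ψ + M_u. -/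

import Mathlib

open Matrix

/-!
Along the closed loop `ξ (k + i) = Π_i ξ_k`, and periodicity of the gains gives
`Π_{jm+r} = Π_r Ψ^j`, so the cost of the `j`-th period is the quadratic form of
`(Ψᵀ)^j M_u Ψ^j` at `ξ_k`. The input costs are nonnegative because `r̃ ⪰ 0`, so their series may
be regrouped into periods, which yields `ξ_kᵀ P_u ξ_k`. Conjugating the series for `P_u` by `Ψ`
shifts it by one term, which is the Lyapunov equation.
-/

theorem Function.Periodic.orderedProd_mul_add {M : Type*} [Monoid M] {F : ℕ → M} {m : ℕ}
    (hF : Function.Periodic F m) {P : ℕ → M} (h0 : P 0 = 1) (hP : ∀ i, P (i + 1) = F i * P i)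
    (j i : ℕ) : P (j * m + i) = P i * P m ^ j := by
  have hshift : ∀ i, P (m + i) = P i * P m := by
    intro i
    induction i with
    | zero => simp [h0]
    | succ i ih => rw [← add_assoc, hP, add_comm m i, hF, add_comm, ih, hP, mul_assoc]
  induction j with
  | zero => simp
  | succ j ih => rw [add_mul, one_mul, add_comm (j * m), add_assoc, hshift, ih, pow_succ, mul_assoc]

theorem HasSum.eq_mul_mul_add {R : Type*} [Ring R] [TopologicalSpace R] [IsTopologicalRing R]
    [T2Space R] {a b M P : R} (h : HasSum (fun j : ℕ => a ^ j * M * b ^ j) P) :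
    P = a * P * b + M := by
  have hshift : HasSum (fun j : ℕ => a ^ (j + 1) * M * b ^ (j + 1)) (a * P * b) := by
    simpa only [pow_succ' a, pow_succ b, mul_assoc] using (h.mul_left a).mul_right b
  have htail := (hasSum_nat_add_iff' 1).mpr h
  simp only [Finset.range_one, Finset.sum_singleton, pow_zero, one_mul, mul_one] at htail
  rw [← htail.unique hshift, sub_add_cancel]

theorem HasSum.dotProduct_mulVec {ι n R : Type*} [Fintype n] [NonUnitalNonAssocSemiring R]
    [TopologicalSpace R] [IsTopologicalSemiring R] {f : ι → Matrix n n R} {P : Matrix n n R}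
    (h : HasSum f P) (x y : n → R) :
    HasSum (fun i => x ⬝ᵥ (f i *ᵥ y)) (x ⬝ᵥ (P *ᵥ y)) :=
  h.map (⟨⟨fun M => x ⬝ᵥ (M *ᵥ y), by simp⟩, fun A B => by simp [add_mulVec]⟩ :
      Matrix n n R →+ R)
    (continuous_const.dotProduct (continuous_id.matrix_mulVec continuous_const))

theorem Matrix.mulVec_dotProduct_mulVec_mulVec {m n R : Type*} [Fintype m] [Fintype n]
    [CommSemiring R] (A : Matrix m m R) (B : Matrix m n R) (x : n → R) :
    (B *ᵥ x) ⬝ᵥ (A *ᵥ (B *ᵥ x)) = x ⬝ᵥ ((Bᵀ * A * B) *ᵥ x) := by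
  rw [mulVec_mulVec, dotProduct_mulVec, ← vecMul_transpose, vecMul_vecMul,
    dotProduct_mulVec, Matrix.mul_assoc]

theorem hasSum_of_hasSum_sum_range_mul_add {f : ℕ → ℝ} (hf : ∀ i, 0 ≤ f i) (m : ℕ) [NeZero m]
    {a : ℝ} (h : HasSum (fun j => ∑ r ∈ Finset.range m, f (j * m + r)) a) : HasSum f a := by
  have hblock : ∀ j, ∑ r ∈ Finset.range m, f (j * m + r) = ∑ r : Fin m, f (j * m + r) :=
    fun j => (Fin.sum_univ_eq_sum_range (fun r => f (j * m + r)) m).symm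
  simp only [hblock] at h
  have hprod : Summable fun q : ℕ × Fin m => f (q.1 * m + q.2) :=
    (summable_prod_of_nonneg fun _ => hf _).2
      ⟨fun _ => .of_finite, by simpa only [tsum_fintype] using h.summable⟩
  rw [← (Nat.divModEquiv m).symm.hasSum_iff,
    h.unique (hprod.hasSum.prod_fiberwise fun _ => hasSum_fintype _)]
  exact hprod.hasSum

/-- Input-cost formula for a linear m-periodic closed loop under periodic feedback.
`σ k = (k % m) + 1`; `ξ_{i+1} = Φ_{σ(i)} ξ_i` for `i ≥ k`, inputs
`u_{k+i} = K_{σ(k+i)} ξ_{k+i}`; `Π_i` are partial products with `Π₀ = I`, `Ψ = Π_m`,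
`M_u = Σ_{i=0}^{m−1} (K_{σ(k+i)}Π_i)ᵀ r̃ (K_{σ(k+i)}Π_i)`.  If `j ↦ (Ψᵀ)ʲ M_u Ψʲ` is
summable with sum `P_u`, then `Σ_{i=0}^∞ u_{k+i}ᵀ r̃ u_{k+i} = ξ_kᵀ P_u ξ_k` and
`P_u = Ψᵀ P_u Ψ + M_u`. -/
theorem stmt_9 {n p : ℕ} (m : ℕ) (hm : 1 ≤ m)
    (Φ : ℕ → Matrix (Fin n) (Fin n) ℝ)
    (K : ℕ → Matrix (Fin p) (Fin n) ℝ)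
    (rt : Matrix (Fin p) (Fin p) ℝ) (hrt : rt.PosSemidef)
    (σ : ℕ → ℕ) (hσ : ∀ k, σ k = k % m + 1)
    (k : ℕ) (ξ : ℕ → Fin n → ℝ)
    (hdyn : ∀ i, k ≤ i → ξ (i + 1) = (Φ (σ i)).mulVec (ξ i))
    (u : ℕ → Fin p → ℝ)
    (hu : ∀ i, u (k + i) = (K (σ (k + i))).mulVec (ξ (k + i)))
    (Pmat : ℕ → Matrix (Fin n) (Fin n) ℝ)
    (hPmat0 : Pmat 0 = 1)
    (hPmat : ∀ i, Pmat (i + 1) = Φ (σ (k + i)) * Pmat i)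
    (Ψ : Matrix (Fin n) (Fin n) ℝ) (hΨ : Ψ = Pmat m)
    (Mu : Matrix (Fin n) (Fin n) ℝ)
    (hMu : Mu = ∑ i ∈ Finset.range m,
      (K (σ (k + i)) * Pmat i)ᵀ * rt * (K (σ (k + i)) * Pmat i))
    (hsum : Summable fun j : ℕ => (Ψᵀ) ^ j * Mu * Ψ ^ j)
    (Pu : Matrix (Fin n) (Fin n) ℝ)
    (hPu : Pu = ∑' j : ℕ, (Ψᵀ) ^ j * Mu * Ψ ^ j) :
    (∑' i : ℕ, (u (k + i)) ⬝ᵥ (rt.mulVec (u (k + i))))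
        = (ξ k) ⬝ᵥ (Pu.mulVec (ξ k))
      ∧ Pu = Ψᵀ * Pu * Ψ + Mu := by
  have : NeZero m := ⟨by omega⟩
  have hper : Function.Periodic (fun i => σ (k + i)) m := fun i => by
    simp only [hσ, ← add_assoc, Nat.add_mod_right]
  have hPmat_block : ∀ j i, Pmat (j * m + i) = Pmat i * Ψ ^ j :=
    hΨ ▸ (hper.comp Φ).orderedProd_mul_add hPmat0 hPmat
  have hξ : ∀ i, ξ (k + i) = Pmat i *ᵥ ξ k := by
    intro i
    induction i with
    | zero => simp [hPmat0]
    | succ i ih => rw [← add_assoc, hdyn _ (Nat.le_add_right k i), ih, hPmat, mulVec_mulVec]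
  have hcost : ∀ i, u (k + i) ⬝ᵥ (rt *ᵥ u (k + i)) =
      ξ k ⬝ᵥ (((K (σ (k + i)) * Pmat i)ᵀ * rt * (K (σ (k + i)) * Pmat i)) *ᵥ ξ k) := fun i => by
    rw [hu, hξ, mulVec_mulVec, mulVec_dotProduct_mulVec_mulVec]
  have hblock : ∀ j, ∑ r ∈ Finset.range m, u (k + (j * m + r)) ⬝ᵥ (rt *ᵥ u (k + (j * m + r))) =
      ξ k ⬝ᵥ (((Ψᵀ) ^ j * Mu * Ψ ^ j) *ᵥ ξ k) := fun j => by
    have hσ_block : ∀ r, σ (k + (j * m + r)) = σ (k + r) := fun r => by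
      simpa [add_left_comm, add_comm] using hper.nat_mul j r
    simp only [hcost, hPmat_block, hσ_block]
    rw [← dotProduct_sum, ← sum_mulVec, hMu, Finset.mul_sum, Finset.sum_mul]
    simp only [← Matrix.mul_assoc, transpose_mul, transpose_pow]
  have hS : HasSum (fun j : ℕ => (Ψᵀ) ^ j * Mu * Ψ ^ j) Pu := hPu ▸ hsum.hasSum
  refine ⟨?_, hS.eq_mul_mul_add⟩
  refine (hasSum_of_hasSum_sum_range_mul_add (fun i => ?_) m ?_).tsum_eq
  · exact hrt.dotProduct_mulVec_nonneg _
  · simpa only [hblock] using hS.dotProduct_mulVec (ξ k) (ξ k)
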